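/- Under the stated assumptions on the abstract evolution setting, let F ∈ W¹(H), Ξ = (ξ, χ) ∈ W²(M), let U be a solution of the evolution problem (⋆), and set C_Ξ := ∫₀^∞ ‖Ξ̈(τ)‖_M dτ and C_F := ∫₀^∞ ‖Ḟ(τ)‖_H dτ. Then for all t ≥ 0: ‖U(t)‖_H ≤ C_lift C_Ξ (2t + t²/2) + C_F t, and C₁⋆ ‖U(t)‖_V ≤ C_lift C_Ξ (2 + 3t + t²/2) + C_F (2 + t) + ‖G‖_{M₁→H} C_Ξ t. In particular, U is polynomially bounded in time both as an H-valued and as a V-valued function. (Polynomial bounds from the proof of Theorem 3.2.) -/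

import Mathlib

open Set MeasureTheory
open scoped RealInnerProductSpace

lemma ftc_norm_le' {E : Type*} [NormedAddCommGroup E] [NormedSpace ℝ E] [CompleteSpace E]
    {f f' : ℝ → E} {a b : ℝ}
    (hderiv : ∀ t ∈ Ici (0:ℝ), HasDerivWithinAt f (f' t) (Ici 0) t)
    (hint : IntervalIntegrable f' MeasureTheory.volume a b)
    (ha : 0 ≤ a) (hab : a ≤ b) :
    ‖f b - f a‖ ≤ ∫ τ in a..b, ‖f' τ‖ := by
  have hcont : ContinuousOn f (Icc a b) := fun x hx =>
    ((hderiv x (le_trans ha hx.1)).continuousWithinAt).mono (fun y hy => le_trans ha hy.1)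
  have heq : ∫ τ in a..b, f' τ = f b - f a :=
    intervalIntegral.integral_eq_sub_of_hasDeriv_right_of_le hab hcont
      (fun x hx => (hderiv x (le_trans ha (le_of_lt hx.1))).mono
        (fun y hy => le_of_lt (lt_of_le_of_lt (le_trans ha (le_of_lt hx.1)) hy))) hint
  rw [← heq]
  exact intervalIntegral.norm_integral_le_integral_norm hab

lemma energy_est {H : Type*} [NormedAddCommGroup H] [InnerProductSpace ℝ H]
    {w d f : ℝ → H}
    (hw : ∀ t ∈ Ici (0:ℝ), HasDerivWithinAt w (d t) (Ici 0) t)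
    (hinner : ∀ t ∈ Ici (0:ℝ), ⟪d t, w t⟫ ≤ ‖f t‖ * ‖w t‖)
    (hf : ContinuousOn f (Ici 0)) :
    ∀ t ∈ Ici (0:ℝ), ‖w t‖ ≤ ‖w 0‖ + ∫ τ in (0:ℝ)..t, ‖f τ‖ := by
  intro t ht
  set fc : ℝ → H := fun τ => f (max τ 0) with hfcdef
  have hfc : Continuous fc :=
    hf.comp_continuous (continuous_id.max continuous_const) (fun x => le_max_right x 0)
  have hfceq : ∀ τ : ℝ, 0 ≤ τ → fc τ = f τ := by
    intro τ hτ; simp [hfcdef, max_eq_left hτ]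
  set N : ℝ → ℝ := fun τ => ∫ σ in (0:ℝ)..τ, ‖fc σ‖ with hNdef
  have hN : ∀ x : ℝ, HasDerivAt N (‖fc x‖) x := by
    intro x
    exact intervalIntegral.integral_hasDerivAt_right
      ((hfc.norm).intervalIntegrable 0 x)
      ((hfc.norm).stronglyMeasurableAtFilter _ _)
      (hfc.norm.continuousAt)
  have hNt : N t = ∫ τ in (0:ℝ)..t, ‖f τ‖ := by
    apply intervalIntegral.integral_congr
    intro σ hσ
    rw [uIcc_of_le ht] at hσ
    simp [hfceq σ hσ.1]
  apply le_of_forall_pos_le_add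
  intro ε hε
  set φ : ℝ → ℝ := fun τ => ⟪w τ, w τ⟫ + ε ^ 2 with hφdef
  have hφpos : ∀ τ, 0 < φ τ :=
    fun τ => add_pos_of_nonneg_of_pos real_inner_self_nonneg (by positivity)
  set ψ : ℝ → ℝ := fun τ => Real.sqrt (φ τ) with hψdef
  have hψpos : ∀ τ, 0 < ψ τ := fun τ => Real.sqrt_pos.mpr (hφpos τ)
  have hwψ : ∀ τ, ‖w τ‖ ≤ ψ τ := by
    intro τ
    have : ‖w τ‖ = Real.sqrt (⟪w τ, w τ⟫) := by
      rw [real_inner_self_eq_norm_sq, Real.sqrt_sq (norm_nonneg _)]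
    rw [this]
    exact Real.sqrt_le_sqrt (by simp [hφdef]; positivity)
  have hφd : ∀ τ ∈ Ici (0:ℝ), HasDerivWithinAt φ (2 * ⟪d τ, w τ⟫) (Ici 0) τ := by
    intro τ hτ
    have h1 := ((hw τ hτ).inner ℝ (hw τ hτ)).add_const (ε ^ 2)
    have h2 : ⟪w τ, d τ⟫ + ⟪d τ, w τ⟫ = 2 * ⟪d τ, w τ⟫ := by
      rw [real_inner_comm]; ring
    rw [h2] at h1
    exact h1
  have hψd : ∀ τ ∈ Ici (0:ℝ),
      HasDerivWithinAt ψ ((2 * ⟪d τ, w τ⟫) / (2 * ψ τ)) (Ici 0) τ := by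
    intro τ hτ
    exact (hφd τ hτ).sqrt (ne_of_gt (hφpos τ))
  have hψle : ∀ τ ∈ Ici (0:ℝ), (2 * ⟪d τ, w τ⟫) / (2 * ψ τ) ≤ ‖fc τ‖ := by
    intro τ hτ
    rw [hfceq τ hτ]
    rw [div_le_iff₀ (by nlinarith [hψpos τ])]
    have h1 : ⟪d τ, w τ⟫ ≤ ‖f τ‖ * ‖w τ‖ := hinner τ hτ
    have h2 : ‖f τ‖ * ‖w τ‖ ≤ ‖f τ‖ * ψ τ :=
      mul_le_mul_of_nonneg_left (hwψ τ) (norm_nonneg _)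
    nlinarith [hψpos τ]
  set m : ℝ → ℝ := fun τ => N τ - ψ τ with hmdef
  have hmono : MonotoneOn m (Ici 0) := by
    apply monotoneOn_of_deriv_nonneg (convex_Ici 0)
    · exact (continuous_iff_continuousAt.mpr (fun x => (hN x).continuousAt)).continuousOn.sub
        (fun x hx => ((hψd x hx).continuousWithinAt))
    · intro x hx
      rw [interior_Ici] at hx
      exact (((hN x).sub ((hψd x (mem_Ici.mpr (le_of_lt (mem_Ioi.mp hx)))).hasDerivAt
        (Ici_mem_nhds hx))).differentiableAt).differentiableWithinAt
    · intro x hx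
      rw [interior_Ici] at hx
      have hd := (hN x).sub ((hψd x (mem_Ici.mpr (le_of_lt (mem_Ioi.mp hx)))).hasDerivAt (Ici_mem_nhds hx))
      rw [show m = N - ψ from rfl, hd.deriv]
      have := hψle x (mem_Ici.mpr (le_of_lt (mem_Ioi.mp hx)))
      linarith
  have hm0 : m 0 ≤ m t := hmono (self_mem_Ici) ht ht
  have hN0 : N 0 = 0 := by simp [hNdef]
  have hψ0 : ψ 0 ≤ ‖w 0‖ + ε := by
    have : φ 0 ≤ (‖w 0‖ + ε) ^ 2 := by
      simp only [hφdef, real_inner_self_eq_norm_sq]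
      nlinarith [norm_nonneg (w 0)]
    calc ψ 0 ≤ Real.sqrt ((‖w 0‖ + ε) ^ 2) := Real.sqrt_le_sqrt this
    _ = ‖w 0‖ + ε := Real.sqrt_sq (by positivity)
  have := hwψ t
  have hfin : ψ t ≤ ψ 0 + N t := by
    simp only [hmdef, hN0] at hm0; linarith
  rw [hNt] at hfin
  linarith


lemma primitive_shift {k : ℝ → ℝ} {C : ℝ}
    (hii : ∀ a b : ℝ, 0 ≤ a → a ≤ b → IntervalIntegrable k volume a b)
    (hnn : ∀ x, 0 ≤ k x)
    (hbnd : ∀ a b : ℝ, 0 ≤ a → a ≤ b → (∫ τ in a..b, k τ) ≤ C)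
    {s t : ℝ} (hs : 0 ≤ s) (ht : 0 ≤ t) :
    (∀ τ, 0 ≤ τ → (∫ σ in τ..(τ + s), k σ)
        = (∫ σ in (0:ℝ)..(τ + s), k σ) - ∫ σ in (0:ℝ)..τ, k σ) ∧
    IntervalIntegrable
      (fun τ => (∫ σ in (0:ℝ)..(τ + s), k σ) - ∫ σ in (0:ℝ)..τ, k σ) volume 0 t ∧
    (∫ τ in (0:ℝ)..t,
        ((∫ σ in (0:ℝ)..(τ + s), k σ) - ∫ σ in (0:ℝ)..τ, k σ)) ≤ C * s := by
  set P : ℝ → ℝ := fun x => ∫ σ in (0:ℝ)..x, k σ with hP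
  have hadd : ∀ τ, 0 ≤ τ → P τ + (∫ σ in τ..(τ + s), k σ) = P (τ + s) := fun τ hτ =>
    intervalIntegral.integral_add_adjacent_intervals (hii 0 τ le_rfl hτ)
      (hii τ (τ + s) hτ (by linarith))
  have h1 : ∀ τ, 0 ≤ τ → (∫ σ in τ..(τ + s), k σ) = P (τ + s) - P τ := fun τ hτ => by
    have := hadd τ hτ; linarith
  have hPnn : ∀ x, 0 ≤ x → 0 ≤ P x := fun x hx =>
    intervalIntegral.integral_nonneg hx (fun u _ => hnn u)
  have hmono : MonotoneOn P (Ici 0) := by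
    intro x hx y hy hxy
    have h2 := intervalIntegral.integral_add_adjacent_intervals
      (hii 0 x le_rfl hx) (hii x y hx hxy)
    have h3 : 0 ≤ ∫ σ in x..y, k σ :=
      intervalIntegral.integral_nonneg hxy (fun u _ => hnn u)
    simp only [hP] at h2 ⊢
    linarith
  have hPii : ∀ a b : ℝ, 0 ≤ a → a ≤ b → IntervalIntegrable P volume a b := by
    intro a b ha hab
    refine MonotoneOn.intervalIntegrable (hmono.mono ?_)
    rw [uIcc_of_le hab]
    exact fun x hx => le_trans ha hx.1
  have hPsii : IntervalIntegrable (fun τ => P (τ + s)) volume 0 t := by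
    refine MonotoneOn.intervalIntegrable ?_
    intro x hx y hy hxy
    rw [uIcc_of_le ht] at hx hy
    exact hmono (by simp; linarith [hx.1]) (by simp; linarith [hy.1]) (by linarith)
  refine ⟨h1, hPsii.sub (hPii 0 t le_rfl ht), ?_⟩
  rw [intervalIntegral.integral_sub hPsii (hPii 0 t le_rfl ht)]
  have e1 : (∫ τ in (0:ℝ)..t, P (τ + s)) = ∫ τ in s..(t + s), P τ := by
    simpa using intervalIntegral.integral_comp_add_right (a := (0:ℝ)) (b := t) (f := P) s
  rw [e1]
  have ha1 := intervalIntegral.integral_add_adjacent_intervals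
    (hPii 0 s le_rfl hs) (hPii s (t + s) hs (by linarith))
  have ha2 := intervalIntegral.integral_add_adjacent_intervals
    (hPii 0 t le_rfl ht) (hPii t (t + s) ht (by linarith))
  have h0s : 0 ≤ ∫ τ in (0:ℝ)..s, P τ :=
    intervalIntegral.integral_nonneg hs (fun u hu => hPnn u hu.1)
  have hts : (∫ τ in t..(t + s), P τ) ≤ C * s := by
    have hb : (∫ τ in t..(t + s), P τ) ≤ ∫ _τ in t..(t + s), C := by
      refine intervalIntegral.integral_mono_on (by linarith)
        (hPii t (t + s) ht (by linarith)) intervalIntegrable_const ?_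
      intro x hx
      exact hbnd 0 x le_rfl (le_trans ht hx.1)
    have : (∫ _τ in t..(t + s), C) = C * s := by
      rw [intervalIntegral.integral_const, smul_eq_mul]; ring
    linarith
  linarith

/-- **Polynomial bounds from the proof of Theorem 3.2.**  If `F ∈ W¹(H)`,
`Ξ = (ξ, χ) ∈ W²(M)`, `U` solves the evolution problem (⋆), and
`C_Ξ := ∫₀^∞ ‖Ξ̈‖`, `C_F := ∫₀^∞ ‖Ḟ‖`, then for all `t ≥ 0`:
`‖U(t)‖_H ≤ C_lift C_Ξ (2t + t²/2) + C_F t` and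
`C₁⋆‖U(t)‖_V ≤ C_lift C_Ξ (2 + 3t + t²/2) + C_F (2 + t) + ‖G‖ C_Ξ t`;
in particular `U` is polynomially bounded in time as an `H`- and as a `V`-valued
function. -/
theorem polynomial_bounds_abstract_evolution
    {H V M₁ M₂ : Type*}
    [NormedAddCommGroup H] [InnerProductSpace ℝ H] [CompleteSpace H]
    [NormedAddCommGroup V] [InnerProductSpace ℝ V] [CompleteSpace V]
    [NormedAddCommGroup M₁] [InnerProductSpace ℝ M₁] [CompleteSpace M₁]
    [NormedAddCommGroup M₂] [InnerProductSpace ℝ M₂] [CompleteSpace M₂]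
    -- continuous embedding of V into H
    (ι : V →L[ℝ] H) (hι : Function.Injective ι)
    -- the operators
    (Astar : V →L[ℝ] H) (B : V →L[ℝ] M₂) (G : M₁ →L[ℝ] H)
    (hB : Function.Surjective B)
    -- (i) norm equivalence
    (C₁ C₂ : ℝ) (hC₁ : 0 < C₁) (hC₂ : 0 < C₂)
    (hnorm : ∀ u : V, C₁ * ‖u‖ ≤ ‖ι u‖ + ‖Astar u‖ ∧ ‖ι u‖ + ‖Astar u‖ ≤ C₂ * ‖u‖)
    -- (ii) (A u, u)_H = 0 on D(A) = ker B
    (hskew : ∀ u : V, B u = 0 → ⟪Astar u, ι u⟫ = 0)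
    -- (iii) I ± A surjective from D(A) onto H
    (hsurjPlus : ∀ f : H, ∃ u : V, B u = 0 ∧ ι u + Astar u = f)
    (hsurjMinus : ∀ f : H, ∃ u : V, B u = 0 ∧ ι u - Astar u = f)
    -- (iv) lifting property
    (Clift : ℝ) (hClift : 0 < Clift)
    (hlift : ∀ Ξ : M₁ × M₂, ∃! u : V, ι u = Astar u + G Ξ.1 ∧ B u = Ξ.2)
    (hliftBound : ∀ (Ξ : M₁ × M₂) (u : V),
        (ι u = Astar u + G Ξ.1 ∧ B u = Ξ.2) → ‖ι u‖ + ‖u‖ ≤ Clift * ‖Ξ‖)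
    -- data: F ∈ W¹(H)
    (F F' : ℝ → H)
    (hF0 : F 0 = 0)
    (hFderiv : ∀ t ∈ Ici (0 : ℝ), HasDerivWithinAt F (F' t) (Ici 0) t)
    (hF'int : IntegrableOn F' (Ioi 0))
    -- data: Ξ = (ξ, χ) ∈ W²(M)
    (ξ : ℝ → M₁) (χ : ℝ → M₂) (Ξ' Ξ'' : ℝ → M₁ × M₂)
    (hΞ0 : (ξ 0, χ 0) = (0 : M₁ × M₂)) (hΞ'0 : Ξ' 0 = 0)
    (hΞderiv : ∀ t ∈ Ici (0 : ℝ), HasDerivWithinAt (fun τ => (ξ τ, χ τ)) (Ξ' t) (Ici 0) t)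
    (hΞ'deriv : ∀ t ∈ Ici (0 : ℝ), HasDerivWithinAt Ξ' (Ξ'' t) (Ici 0) t)
    (hΞ''int : IntegrableOn Ξ'' (Ioi 0))
    -- U is a solution of the evolution problem (⋆)
    (U : ℝ → V)
    (hUcont : ContinuousOn U (Ici 0))
    (hU0 : U 0 = 0)
    (hUB : ∀ t ∈ Ici (0 : ℝ), B (U t) = χ t)
    (hUode : ∀ t ∈ Ici (0 : ℝ),
        HasDerivWithinAt (fun τ => ι (U τ)) (Astar (U t) + G (ξ t) + F t) (Ici 0) t)
    -- the constants C_Ξ and C_F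
    (CΞ CF : ℝ)
    (hCΞ : CΞ = ∫ τ in Ioi (0:ℝ), ‖Ξ'' τ‖)
    (hCF : CF = ∫ τ in Ioi (0:ℝ), ‖F' τ‖) :
    ∀ t ∈ Ici (0 : ℝ),
      ‖ι (U t)‖ ≤ Clift * CΞ * (2 * t + t ^ 2 / 2) + CF * t ∧
      C₁ * ‖U t‖ ≤
        Clift * CΞ * (2 + 3 * t + t ^ 2 / 2) + CF * (2 + t) + ‖G‖ * CΞ * t := by
  have hClift' : (0:ℝ) ≤ Clift := le_of_lt hClift
  have hCΞnn : 0 ≤ CΞ := by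
    rw [hCΞ]; exact integral_nonneg fun τ => norm_nonneg _
  have hCFnn : 0 ≤ CF := by
    rw [hCF]; exact integral_nonneg fun τ => norm_nonneg _
  -- interval integrability of the given integrable derivatives
  have hΞ''ii : ∀ a b : ℝ, 0 ≤ a → a ≤ b → IntervalIntegrable Ξ'' volume a b := by
    intro a b ha hab
    rw [intervalIntegrable_iff_integrableOn_Ioc_of_le hab]
    exact hΞ''int.mono_set (fun x hx => lt_of_le_of_lt ha hx.1)
  have hF'ii : ∀ a b : ℝ, 0 ≤ a → a ≤ b → IntervalIntegrable F' volume a b := by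
    intro a b ha hab
    rw [intervalIntegrable_iff_integrableOn_Ioc_of_le hab]
    exact hF'int.mono_set (fun x hx => lt_of_le_of_lt ha hx.1)
  have hΞ''bnd : ∀ a b : ℝ, 0 ≤ a → a ≤ b → (∫ τ in a..b, ‖Ξ'' τ‖) ≤ CΞ := by
    intro a b ha hab
    rw [hCΞ, intervalIntegral.integral_of_le hab]
    exact setIntegral_mono_set hΞ''int.norm
      (Filter.Eventually.of_forall fun x => norm_nonneg _)
      (HasSubset.Subset.eventuallyLE fun x hx => lt_of_le_of_lt ha hx.1)
  have hF'bnd : ∀ a b : ℝ, 0 ≤ a → a ≤ b → (∫ τ in a..b, ‖F' τ‖) ≤ CF := by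
    intro a b ha hab
    rw [hCF, intervalIntegral.integral_of_le hab]
    exact setIntegral_mono_set hF'int.norm
      (Filter.Eventually.of_forall fun x => norm_nonneg _)
      (HasSubset.Subset.eventuallyLE fun x hx => lt_of_le_of_lt ha hx.1)
  -- continuity of the data
  have hΞcont : ContinuousOn (fun τ => (ξ τ, χ τ)) (Ici (0:ℝ)) :=
    fun x hx => (hΞderiv x hx).continuousWithinAt
  have hΞ'cont : ContinuousOn Ξ' (Ici (0:ℝ)) :=
    fun x hx => (hΞ'deriv x hx).continuousWithinAt
  have hFcont : ContinuousOn F (Ici (0:ℝ)) :=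
    fun x hx => (hFderiv x hx).continuousWithinAt
  -- pointwise bounds on the data
  have hΞ'bd : ∀ t ∈ Ici (0:ℝ), ‖Ξ' t‖ ≤ CΞ := by
    intro t ht
    have h := ftc_norm_le' hΞ'deriv (hΞ''ii 0 t le_rfl ht) le_rfl ht
    rw [hΞ'0, sub_zero] at h
    exact h.trans (hΞ''bnd 0 t le_rfl ht)
  have hΞbd : ∀ t ∈ Ici (0:ℝ), ‖(ξ t, χ t)‖ ≤ CΞ * t := by
    intro t ht
    have hii : IntervalIntegrable Ξ' volume 0 t := by
      refine ContinuousOn.intervalIntegrable (hΞ'cont.mono ?_)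
      rw [uIcc_of_le ht]; exact fun x hx => hx.1
    have h := ftc_norm_le' hΞderiv hii le_rfl ht
    rw [hΞ0, sub_zero] at h
    refine h.trans ?_
    have h2 : (∫ τ in (0:ℝ)..t, ‖Ξ' τ‖) ≤ ∫ _τ in (0:ℝ)..t, CΞ := by
      refine intervalIntegral.integral_mono_on ht hii.norm intervalIntegrable_const ?_
      intro x hx; exact hΞ'bd x hx.1
    have h3 : (∫ _τ in (0:ℝ)..t, CΞ) = CΞ * t := by
      rw [intervalIntegral.integral_const, smul_eq_mul]; ring
    linarith
  have hFbd : ∀ t ∈ Ici (0:ℝ), ‖F t‖ ≤ CF := by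
    intro t ht
    have h := ftc_norm_le' hFderiv (hF'ii 0 t le_rfl ht) le_rfl ht
    rw [hF0, sub_zero] at h
    exact h.trans (hF'bnd 0 t le_rfl ht)
  -- the lifting operator
  have hLex : ∀ Θ : M₁ × M₂, ∃ u : V, ι u = Astar u + G Θ.1 ∧ B u = Θ.2 :=
    fun Θ => (hlift Θ).exists
  choose L hL1 hL2 using hLex
  have hLuniq : ∀ (Θ : M₁ × M₂) (u : V), ι u = Astar u + G Θ.1 → B u = Θ.2 → u = L Θ := by
    intro Θ u h1 h2
    obtain ⟨v, _, hvu⟩ := hlift Θ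
    rw [hvu u ⟨h1, h2⟩, hvu (L Θ) ⟨hL1 Θ, hL2 Θ⟩]
  have hLadd : ∀ Θ Θ' : M₁ × M₂, L (Θ + Θ') = L Θ + L Θ' := by
    intro Θ Θ'
    refine (hLuniq _ _ ?_ ?_).symm
    · rw [map_add, map_add, hL1 Θ, hL1 Θ', Prod.fst_add, map_add]; abel
    · rw [map_add, hL2 Θ, hL2 Θ', Prod.snd_add]
  have hLsmul : ∀ (c : ℝ) (Θ : M₁ × M₂), L (c • Θ) = c • L Θ := by
    intro c Θ
    refine (hLuniq _ _ ?_ ?_).symm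
    · rw [_root_.map_smul, _root_.map_smul, hL1 Θ, Prod.smul_fst, _root_.map_smul, smul_add]
    · rw [_root_.map_smul, hL2 Θ, Prod.smul_snd]
  have hLbnd0 : ∀ Θ : M₁ × M₂, ‖L Θ‖ ≤ Clift * ‖Θ‖ := fun Θ =>
    le_trans (le_add_of_nonneg_left (norm_nonneg _)) (hliftBound Θ (L Θ) ⟨hL1 Θ, hL2 Θ⟩)
  set Lc : (M₁ × M₂) →L[ℝ] V := LinearMap.mkContinuous
    { toFun := L, map_add' := hLadd, map_smul' := hLsmul } Clift hLbnd0 with hLcdef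
  have hLc : ∀ Θ, Lc Θ = L Θ := fun _ => rfl
  have hιLbnd : ∀ Θ : M₁ × M₂, ‖ι (Lc Θ)‖ ≤ Clift * ‖Θ‖ := fun Θ => by
    rw [hLc]
    exact le_trans (le_add_of_nonneg_right (norm_nonneg _))
      (hliftBound Θ (L Θ) ⟨hL1 Θ, hL2 Θ⟩)
  have hLc1 : ∀ Θ : M₁ × M₂, ι (Lc Θ) = Astar (Lc Θ) + G Θ.1 := fun Θ => by
    rw [hLc]; exact hL1 Θ
  have hLc2 : ∀ Θ : M₁ × M₂, B (Lc Θ) = Θ.2 := fun Θ => by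
    rw [hLc]; exact hL2 Θ
  clear_value Lc
  -- main auxiliary functions
  set g : ℝ → H := fun τ => ι (Lc (ξ τ, χ τ)) - ι (Lc (Ξ' τ)) + F τ with hgdef
  set w : ℝ → H := fun τ => ι (U τ) - ι (Lc (ξ τ, χ τ)) with hwdef
  set d : ℝ → H := fun τ => Astar (U τ) + G (ξ τ) + F τ - ι (Lc (Ξ' τ)) with hddef
  set g' : ℝ → H := fun τ => ι (Lc (Ξ' τ)) - ι (Lc (Ξ'' τ)) + F' τ with hg'def
  clear_value g w d g'
  have hw0 : w 0 = 0 := by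
    simp only [hwdef, hU0, hΞ0, map_zero, sub_self]
  have hd0 : d 0 = 0 := by
    have hξ0 : ξ 0 = 0 := by
      have := congrArg Prod.fst hΞ0; simpa using this
    simp only [hddef, hU0, hξ0, hF0, hΞ'0, map_zero, add_zero, zero_add, sub_self]
  -- derivatives
  have hιΞd : ∀ τ ∈ Ici (0:ℝ),
      HasDerivWithinAt (fun x => ι (Lc (ξ x, χ x))) (ι (Lc (Ξ' τ))) (Ici 0) τ := by
    intro τ hτ
    have := (ι.comp Lc).hasFDerivAt.comp_hasDerivWithinAt τ (hΞderiv τ hτ)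
    simpa [ContinuousLinearMap.coe_comp', Function.comp_def] using this
  have hιΞ'd : ∀ τ ∈ Ici (0:ℝ),
      HasDerivWithinAt (fun x => ι (Lc (Ξ' x))) (ι (Lc (Ξ'' τ))) (Ici 0) τ := by
    intro τ hτ
    have := (ι.comp Lc).hasFDerivAt.comp_hasDerivWithinAt τ (hΞ'deriv τ hτ)
    simpa [ContinuousLinearMap.coe_comp', Function.comp_def] using this
  have hwd : ∀ τ ∈ Ici (0:ℝ), HasDerivWithinAt w (d τ) (Ici 0) τ := by
    intro τ hτ
    have h := (hUode τ hτ).sub (hιΞd τ hτ)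
    rw [hwdef, hddef]
    exact h
  have hgd : ∀ τ ∈ Ici (0:ℝ), HasDerivWithinAt g (g' τ) (Ici 0) τ := by
    intro τ hτ
    rw [hgdef, hg'def]
    exact ((hιΞd τ hτ).sub (hιΞ'd τ hτ)).add (hFderiv τ hτ)
  -- the algebraic identity d - g = A (U - L Ξ)
  have hdg : ∀ τ, d τ - g τ = Astar (U τ - Lc (ξ τ, χ τ)) := by
    intro τ
    have h1 : ι (Lc (ξ τ, χ τ)) = Astar (Lc (ξ τ, χ τ)) + G (ξ τ) := hLc1 (ξ τ, χ τ)
    rw [map_sub]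
    simp only [hddef, hgdef]
    rw [h1]; abel
  have hwι : ∀ τ, w τ = ι (U τ - Lc (ξ τ, χ τ)) := by
    intro τ; rw [hwdef, map_sub]
  -- generic inner-product bound
  have hinner_gen : ∀ (D Gv Wv : H) (u : V), B u = 0 → D - Gv = Astar u → Wv = ι u →
      ⟪D, Wv⟫ ≤ ‖Gv‖ * ‖Wv‖ := by
    intro D Gv Wv u hBu hDG hWv
    have h0 : ⟪Astar u, ι u⟫ = 0 := hskew u hBu
    have hsplit : ⟪D, Wv⟫ = ⟪D - Gv, Wv⟫ + ⟪Gv, Wv⟫ := by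
      rw [inner_sub_left]; ring
    rw [hsplit, hDG, hWv, h0, zero_add]
    exact real_inner_le_norm _ _
  have hBk : ∀ τ ∈ Ici (0:ℝ), B (U τ - Lc (ξ τ, χ τ)) = 0 := by
    intro τ hτ
    rw [map_sub, hUB τ hτ, hLc2]
    exact sub_self _
  -- continuity of g
  have hLccont : Continuous (fun v : M₁ × M₂ => ι (Lc v)) := (ι.comp Lc).continuous
  have hgcont : ContinuousOn g (Ici (0:ℝ)) := by
    rw [hgdef]
    refine ContinuousOn.add (ContinuousOn.sub ?_ ?_) hFcont
    · exact hLccont.comp_continuousOn hΞcont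
    · exact hLccont.comp_continuousOn hΞ'cont
  -- first energy estimate
  have henergy1 : ∀ t ∈ Ici (0:ℝ), ‖w t‖ ≤ ∫ τ in (0:ℝ)..t, ‖g τ‖ := by
    intro t ht
    have h := energy_est hwd (fun τ hτ => hinner_gen (d τ) (g τ) (w τ) _
      (hBk τ hτ) (hdg τ) (hwι τ)) hgcont t ht
    rwa [hw0, norm_zero, zero_add] at h
  -- pointwise bound on g
  have hgbd : ∀ τ ∈ Ici (0:ℝ), ‖g τ‖ ≤ Clift * CΞ * τ + (Clift * CΞ + CF) := by
    intro τ hτ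
    have h1 : ‖g τ‖ ≤ ‖ι (Lc (ξ τ, χ τ))‖ + ‖ι (Lc (Ξ' τ))‖ + ‖F τ‖ := by
      rw [hgdef]
      exact le_trans (norm_add_le _ _) (add_le_add_left (norm_sub_le _ _) _)
    have h2 : ‖ι (Lc (ξ τ, χ τ))‖ ≤ Clift * (CΞ * τ) :=
      le_trans (hιLbnd _) (by gcongr; exact hΞbd τ hτ)
    have h3 : ‖ι (Lc (Ξ' τ))‖ ≤ Clift * CΞ :=
      le_trans (hιLbnd _) (by gcongr; exact hΞ'bd τ hτ)
    have h4 : ‖F τ‖ ≤ CF := hFbd τ hτ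
    linarith
  -- H-norm bound
  have hbound1 : ∀ t ∈ Ici (0:ℝ), ‖ι (U t)‖ ≤ Clift * CΞ * (2 * t + t ^ 2 / 2) + CF * t := by
    intro t ht
    have hgii : IntervalIntegrable (fun τ => ‖g τ‖) volume 0 t := by
      refine ContinuousOn.intervalIntegrable (ContinuousOn.norm (hgcont.mono ?_))
      rw [uIcc_of_le ht]; exact fun x hx => hx.1
    have hc1 : IntervalIntegrable (fun τ : ℝ => Clift * CΞ * τ) volume 0 t :=
      (continuous_const.mul continuous_id).intervalIntegrable 0 t
    have h1 : (∫ τ in (0:ℝ)..t, ‖g τ‖) ≤ ∫ τ in (0:ℝ)..t, (Clift * CΞ * τ + (Clift * CΞ + CF)) := by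
      refine intervalIntegral.integral_mono_on ht hgii (hc1.add intervalIntegrable_const) ?_
      intro x hx; exact hgbd x hx.1
    have h2 : (∫ τ in (0:ℝ)..t, (Clift * CΞ * τ + (Clift * CΞ + CF)))
        = Clift * CΞ * (t ^ 2 / 2) + (Clift * CΞ + CF) * t := by
      rw [intervalIntegral.integral_add hc1 intervalIntegrable_const,
        intervalIntegral.integral_const_mul, integral_id, intervalIntegral.integral_const,
        smul_eq_mul]
      ring
    have h3 : ‖ι (U t)‖ ≤ ‖w t‖ + ‖ι (Lc (ξ t, χ t))‖ := by
      have : ι (U t) = w t + ι (Lc (ξ t, χ t)) := by simp [hwdef]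
      rw [this]; exact norm_add_le _ _
    have h4 : ‖ι (Lc (ξ t, χ t))‖ ≤ Clift * (CΞ * t) :=
      le_trans (hιLbnd _) (by gcongr; exact hΞbd t ht)
    have h5 := henergy1 t ht
    linarith
  -- bound on the derivative d via difference quotients
  have hdbnd : ∀ t ∈ Ici (0:ℝ), ‖d t‖ ≤ Clift * CΞ * t + Clift * CΞ + CF := by
    have hg'ii : ∀ a b : ℝ, 0 ≤ a → a ≤ b → IntervalIntegrable g' volume a b := by
      intro a b ha hab
      rw [hg'def]
      have h1 : IntervalIntegrable (fun σ => ι (Lc (Ξ' σ))) volume a b := by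
        refine ContinuousOn.intervalIntegrable ((hLccont.comp_continuousOn hΞ'cont).mono ?_)
        rw [uIcc_of_le hab]; exact fun x hx => le_trans ha hx.1
      have h2 : IntervalIntegrable (fun σ => ι (Lc (Ξ'' σ))) volume a b := by
        rw [intervalIntegrable_iff_integrableOn_Ioc_of_le hab]
        exact (ι.comp Lc).integrable_comp
          (hΞ''int.mono_set (fun x hx => lt_of_le_of_lt ha hx.1))
      exact (h1.sub h2).add (hF'ii a b ha hab)
    have hg'bd : ∀ σ ∈ Ici (0:ℝ), ‖g' σ‖ ≤ Clift * CΞ + (Clift * ‖Ξ'' σ‖ + ‖F' σ‖) := by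
      intro σ hσ
      have h1 : ‖g' σ‖ ≤ ‖ι (Lc (Ξ' σ))‖ + ‖ι (Lc (Ξ'' σ))‖ + ‖F' σ‖ := by
        rw [hg'def]
        exact le_trans (norm_add_le _ _) (add_le_add_left (norm_sub_le _ _) _)
      have h2 : ‖ι (Lc (Ξ' σ))‖ ≤ Clift * CΞ :=
        le_trans (hιLbnd _) (by gcongr; exact hΞ'bd σ hσ)
      have h3 : ‖ι (Lc (Ξ'' σ))‖ ≤ Clift * ‖Ξ'' σ‖ := hιLbnd _
      linarith
    -- slope limits
    have hslope : ∀ (a : ℝ), 0 ≤ a → ∀ du : H, HasDerivWithinAt w du (Ici 0) a →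
        Filter.Tendsto (fun s : ℝ => ‖s⁻¹ • (w (a + s) - w a)‖)
          (nhdsWithin 0 (Ioi 0)) (nhds ‖du‖) := by
      intro a ha du hu
      have hmap : Filter.Tendsto (fun s : ℝ => a + s) (nhdsWithin 0 (Ioi 0))
          (nhdsWithin a (Ici 0 \ {a})) := by
        refine tendsto_nhdsWithin_of_tendsto_nhds_of_eventually_within _ ?_ ?_
        · have h0 : Filter.Tendsto (fun s : ℝ => a + s) (nhds 0) (nhds (a + 0)) :=
            (continuous_const.add continuous_id).tendsto 0
          rw [add_zero] at h0
          exact h0.mono_left nhdsWithin_le_nhds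
        · filter_upwards [self_mem_nhdsWithin] with s hs
          rw [mem_Ioi] at hs
          refine ⟨mem_Ici.mpr (by linarith), ?_⟩
          simp only [mem_singleton_iff, add_eq_left]
          exact ne_of_gt hs
      have h2 := (hasDerivWithinAt_iff_tendsto_slope.mp hu).comp hmap
      have h3 : Filter.Tendsto (fun s : ℝ => s⁻¹ • (w (a + s) - w a))
          (nhdsWithin 0 (Ioi 0)) (nhds du) := by
        refine Filter.Tendsto.congr' ?_ h2
        filter_upwards [self_mem_nhdsWithin] with s hs
        rw [mem_Ioi] at hs
        show slope w a (a + s) = s⁻¹ • (w (a + s) - w a)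
        rw [slope]
        rw [vsub_eq_sub, add_sub_cancel_left]
      exact h3.norm
    intro t ht
    -- shifted derivative
    have hshiftd : ∀ (s : ℝ), 0 < s → ∀ τ ∈ Ici (0:ℝ),
        HasDerivWithinAt (fun x => w (x + s)) (d (τ + s)) (Ici 0) τ := by
      intro s hs τ hτ
      rw [mem_Ici] at hτ
      have h1 : HasDerivWithinAt (fun x : ℝ => x + s) 1 (Ici 0) τ :=
        ((hasDerivAt_id τ).add_const s).hasDerivWithinAt
      have h2 : HasDerivWithinAt w (d (τ + s)) (Ici 0) (τ + s) :=
        hwd (τ + s) (mem_Ici.mpr (by linarith))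
      have h3 := h2.scomp τ h1 (fun x hx => by
        rw [mem_Ici] at hx ⊢; linarith)
      simpa [Function.comp_def] using h3
    have hgshiftcont : ∀ s : ℝ, 0 < s → ContinuousOn (fun τ => g (τ + s) - g τ) (Ici 0) := by
      intro s hs
      refine ContinuousOn.sub ?_ hgcont
      refine hgcont.comp ((continuous_id.add continuous_const).continuousOn) ?_
      intro x hx
      rw [mem_Ici] at hx
      show (0:ℝ) ≤ x + s
      linarith
    -- per-s estimate
    have hest : ∀ s ∈ Ioi (0:ℝ),
        ‖s⁻¹ • (w (t + s) - w t)‖ ≤ ‖s⁻¹ • (w (0 + s) - w 0)‖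
          + (Clift * CΞ * t + Clift * CΞ + CF) := by
      intro s hs
      rw [mem_Ioi] at hs
      have hws : ∀ τ ∈ Ici (0:ℝ),
          HasDerivWithinAt (fun x => w (x + s) - w x) (d (τ + s) - d τ) (Ici 0) τ :=
        fun τ hτ => (hshiftd s hs τ hτ).sub (hwd τ hτ)
      have hinn : ∀ τ ∈ Ici (0:ℝ), ⟪d (τ + s) - d τ, w (τ + s) - w τ⟫ ≤
          ‖g (τ + s) - g τ‖ * ‖w (τ + s) - w τ‖ := by
        intro τ hτ
        have hτs : τ + s ∈ Ici (0:ℝ) := by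
          rw [mem_Ici] at hτ ⊢; linarith
        refine hinner_gen _ _ _
          ((U (τ + s) - Lc (ξ (τ + s), χ (τ + s))) - (U τ - Lc (ξ τ, χ τ))) ?_ ?_ ?_
        · rw [map_sub, hBk (τ + s) hτs, hBk τ hτ, sub_zero]
        · rw [map_sub, ← hdg, ← hdg]; abel
        · rw [map_sub, ← hwι, ← hwι]
      have hen := energy_est hws hinn (hgshiftcont s hs) t ht
      have hen' : ‖w (t + s) - w t‖ ≤ ‖w (0 + s) - w 0‖
          + ∫ τ in (0:ℝ)..t, ‖g (τ + s) - g τ‖ := hen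
      -- pointwise bound on the integrand
      have hps1 := primitive_shift (k := fun σ => ‖Ξ'' σ‖)
        (fun a b ha hab => (hΞ''ii a b ha hab).norm) (fun x => norm_nonneg _)
        hΞ''bnd (le_of_lt hs) ht
      have hps2 := primitive_shift (k := fun σ => ‖F' σ‖)
        (fun a b ha hab => (hF'ii a b ha hab).norm) (fun x => norm_nonneg _)
        hF'bnd (le_of_lt hs) ht
      have hfsbd : ∀ τ ∈ Icc (0:ℝ) t, ‖g (τ + s) - g τ‖ ≤
          Clift * CΞ * s
            + (Clift * ((∫ σ in (0:ℝ)..(τ + s), ‖Ξ'' σ‖) - ∫ σ in (0:ℝ)..τ, ‖Ξ'' σ‖)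
            + ((∫ σ in (0:ℝ)..(τ + s), ‖F' σ‖) - ∫ σ in (0:ℝ)..τ, ‖F' σ‖)) := by
        intro τ hτ
        have hτ0 : (0:ℝ) ≤ τ := hτ.1
        have hτs : τ ≤ τ + s := by linarith
        have h1 : ‖g (τ + s) - g τ‖ ≤ ∫ σ in τ..(τ + s), ‖g' σ‖ :=
          ftc_norm_le' hgd (hg'ii τ (τ + s) hτ0 hτs) hτ0 hτs
        have hKi := (hΞ''ii τ (τ + s) hτ0 hτs).norm.const_mul Clift
        have hQi := (hF'ii τ (τ + s) hτ0 hτs).norm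
        have h2 : (∫ σ in τ..(τ + s), ‖g' σ‖) ≤
            ∫ σ in τ..(τ + s), (Clift * CΞ + (Clift * ‖Ξ'' σ‖ + ‖F' σ‖)) := by
          refine intervalIntegral.integral_mono_on hτs
            ((hg'ii τ (τ + s) hτ0 hτs).norm)
            (intervalIntegrable_const.add (hKi.add hQi)) ?_
          intro x hx; exact hg'bd x (le_trans hτ0 hx.1)
        have h3 : (∫ σ in τ..(τ + s), (Clift * CΞ + (Clift * ‖Ξ'' σ‖ + ‖F' σ‖)))
            = Clift * CΞ * s + (Clift * (∫ σ in τ..(τ + s), ‖Ξ'' σ‖)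
              + ∫ σ in τ..(τ + s), ‖F' σ‖) := by
          rw [intervalIntegral.integral_add intervalIntegrable_const (hKi.add hQi),
            intervalIntegral.integral_add hKi hQi,
            intervalIntegral.integral_const, intervalIntegral.integral_const_mul,
            smul_eq_mul]
          ring
        rw [hps1.1 τ hτ0, hps2.1 τ hτ0] at h3
        linarith
      -- integrate
      have hfscont : ContinuousOn (fun τ => ‖g (τ + s) - g τ‖) (Icc 0 t) :=
        ((hgshiftcont s hs).mono (fun x hx => hx.1)).norm
      have hint1 : (∫ τ in (0:ℝ)..t, ‖g (τ + s) - g τ‖) ≤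
          Clift * CΞ * s * t + (Clift * (CΞ * s) + CF * s) := by
        have hmon : (∫ τ in (0:ℝ)..t, ‖g (τ + s) - g τ‖) ≤
            ∫ τ in (0:ℝ)..t, (Clift * CΞ * s
              + (Clift * ((∫ σ in (0:ℝ)..(τ + s), ‖Ξ'' σ‖) - ∫ σ in (0:ℝ)..τ, ‖Ξ'' σ‖)
              + ((∫ σ in (0:ℝ)..(τ + s), ‖F' σ‖) - ∫ σ in (0:ℝ)..τ, ‖F' σ‖))) := by
          refine intervalIntegral.integral_mono_on ht ?_
            (intervalIntegrable_const.add ((hps1.2.1.const_mul Clift).add hps2.2.1)) hfsbd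
          refine ContinuousOn.intervalIntegrable ?_
          rw [uIcc_of_le ht]; exact hfscont
        have hsplit : (∫ τ in (0:ℝ)..t, (Clift * CΞ * s
              + (Clift * ((∫ σ in (0:ℝ)..(τ + s), ‖Ξ'' σ‖) - ∫ σ in (0:ℝ)..τ, ‖Ξ'' σ‖)
              + ((∫ σ in (0:ℝ)..(τ + s), ‖F' σ‖) - ∫ σ in (0:ℝ)..τ, ‖F' σ‖))))
            = Clift * CΞ * s * t
              + (Clift * (∫ τ in (0:ℝ)..t,
                  ((∫ σ in (0:ℝ)..(τ + s), ‖Ξ'' σ‖) - ∫ σ in (0:ℝ)..τ, ‖Ξ'' σ‖))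
              + ∫ τ in (0:ℝ)..t,
                  ((∫ σ in (0:ℝ)..(τ + s), ‖F' σ‖) - ∫ σ in (0:ℝ)..τ, ‖F' σ‖)) := by
          rw [intervalIntegral.integral_add intervalIntegrable_const
              ((hps1.2.1.const_mul Clift).add hps2.2.1),
            intervalIntegral.integral_add (hps1.2.1.const_mul Clift) hps2.2.1,
            intervalIntegral.integral_const, intervalIntegral.integral_const_mul,
            smul_eq_mul]
          ring
        have h5 : Clift * (∫ τ in (0:ℝ)..t,
              ((∫ σ in (0:ℝ)..(τ + s), ‖Ξ'' σ‖) - ∫ σ in (0:ℝ)..τ, ‖Ξ'' σ‖))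
            ≤ Clift * (CΞ * s) := mul_le_mul_of_nonneg_left hps1.2.2 hClift'
        have h6 := hps2.2.2
        rw [hsplit] at hmon
        linarith
      -- divide by s
      have hzz : ‖s⁻¹ • (w (0 + s) - w 0)‖ = s⁻¹ * ‖w (0 + s) - w 0‖ := by
        rw [norm_smul, norm_inv, Real.norm_eq_abs, abs_of_pos hs]
      have htt : ‖s⁻¹ • (w (t + s) - w t)‖ = s⁻¹ * ‖w (t + s) - w t‖ := by
        rw [norm_smul, norm_inv, Real.norm_eq_abs, abs_of_pos hs]
      rw [hzz, htt]
      have hfinal : ‖w (t + s) - w t‖ ≤ ‖w (0 + s) - w 0‖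
          + (Clift * CΞ * t + Clift * CΞ + CF) * s := by
        have hra : Clift * CΞ * s * t + (Clift * (CΞ * s) + CF * s)
            = (Clift * CΞ * t + Clift * CΞ + CF) * s := by ring
        linarith [hen', hint1]
      calc s⁻¹ * ‖w (t + s) - w t‖
          ≤ s⁻¹ * (‖w (0 + s) - w 0‖ + (Clift * CΞ * t + Clift * CΞ + CF) * s) :=
            mul_le_mul_of_nonneg_left hfinal (le_of_lt (inv_pos.mpr hs))
        _ = s⁻¹ * ‖w (0 + s) - w 0‖ + (Clift * CΞ * t + Clift * CΞ + CF) := by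
            field_simp
    -- pass to the limit s → 0⁺
    have hlimL := hslope t ht (d t) (hwd t ht)
    have hlim0 := hslope 0 le_rfl (d 0) (hwd 0 (mem_Ici.mpr le_rfl))
    rw [hd0, norm_zero] at hlim0
    have hlimR : Filter.Tendsto
        (fun s : ℝ => ‖s⁻¹ • (w (0 + s) - w 0)‖ + (Clift * CΞ * t + Clift * CΞ + CF))
        (nhdsWithin 0 (Ioi 0)) (nhds (0 + (Clift * CΞ * t + Clift * CΞ + CF))) :=
      hlim0.add tendsto_const_nhds
    rw [zero_add] at hlimR
    exact le_of_tendsto_of_tendsto hlimL hlimR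
      (Filter.eventually_of_mem self_mem_nhdsWithin hest)
  -- final assembly
  intro t ht
  refine ⟨hbound1 t ht, ?_⟩
  have hAU : Astar (U t) = d t + ι (Lc (Ξ' t)) - G (ξ t) - F t := by
    simp only [hddef]; abel
  have hAUb : ‖Astar (U t)‖ ≤ ‖d t‖ + ‖ι (Lc (Ξ' t))‖ + ‖G (ξ t)‖ + ‖F t‖ := by
    rw [hAU]
    calc ‖d t + ι (Lc (Ξ' t)) - G (ξ t) - F t‖
        ≤ ‖d t + ι (Lc (Ξ' t)) - G (ξ t)‖ + ‖F t‖ := norm_sub_le _ _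
      _ ≤ ‖d t + ι (Lc (Ξ' t))‖ + ‖G (ξ t)‖ + ‖F t‖ := by
          gcongr; exact norm_sub_le _ _
      _ ≤ ‖d t‖ + ‖ι (Lc (Ξ' t))‖ + ‖G (ξ t)‖ + ‖F t‖ := by
          gcongr; exact norm_add_le _ _
  have h2 : ‖ι (Lc (Ξ' t))‖ ≤ Clift * CΞ :=
    le_trans (hιLbnd _) (by gcongr; exact hΞ'bd t ht)
  have h3 : ‖G (ξ t)‖ ≤ ‖G‖ * (CΞ * t) := by
    refine le_trans (G.le_opNorm _) ?_
    gcongr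
    exact le_trans (norm_fst_le (ξ t, χ t)) (hΞbd t ht)
  have h4 : ‖F t‖ ≤ CF := hFbd t ht
  have h5 := hdbnd t ht
  have h6 := (hnorm (U t)).1
  have h7 := hbound1 t ht
  linarith
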